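/- Stationarity identity in the proof of Theorem 4.3 (equations (33)–(34)): Assume ℓ_L < u_L and ℓ_R < u_R componentwise. Let (x*, y*) be a strongly stationary point of the LCQP, let x̄ ∈ Ω satisfy 𝓛ˡ(x̄) = 𝓛ˡ(x*) and 𝓡ˡ(x̄) = 𝓡ˡ(x*), let ρ > 0, and define ȳ_A = y*_A; ȳ_{L_i} = y*_{L_i} for i ∉ 𝓛ˡ(x̄) and ȳ_{L_i} = y*_{L_i} + ρ(R_i x̄ − ℓ_{R_i}) for i ∈ 𝓛ˡ(x̄); ȳ_{R_i} = y*_{R_i} for i ∉ 𝓡ˡ(x̄) and ȳ_{R_i} = y*_{R_i} + ρ(L_i x̄ − ℓ_{L_i}) for i ∈ 𝓡ˡ(x̄). Then Qx* + g + ρ(Lᵀ(Rx̄ − ℓ_R) + Rᵀ(Lx̄ − ℓ_L)) = Aᵀȳ_A + Lᵀȳ_L + Rᵀȳ_R, i.e. x* satisfies the stationarity equation of the convexified inner-loop subproblem ϑ_{x̄,ρ} with multipliers ȳ. -/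

import Mathlib

open Matrix
open scoped Classical

noncomputable section

structure LCQPData (n nA nc : ℕ) where
  Q : Matrix (Fin n) (Fin n) ℝ
  g : Fin n → ℝ
  A : Matrix (Fin nA) (Fin n) ℝ
  lA : Fin nA → ℝ
  uA : Fin nA → ℝ
  L : Matrix (Fin nc) (Fin n) ℝ
  R : Matrix (Fin nc) (Fin n) ℝ
  lL : Fin nc → ℝ
  uL : Fin nc → ℝ
  lR : Fin nc → ℝ
  uR : Fin nc → ℝ

variable {n nA nc m : ℕ}

/-- Lower-active set of the constraint `l ≤ M x ≤ u`. -/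
def actL (M : Matrix (Fin m) (Fin n) ℝ) (l u : Fin m → ℝ) (x : Fin n → ℝ) : Set (Fin m) :=
  {i | l i = M.mulVec x i ∧ M.mulVec x i < u i}

/-- Upper-active set of the constraint `l ≤ M x ≤ u`. -/
def actU (M : Matrix (Fin m) (Fin n) ℝ) (l u : Fin m → ℝ) (x : Fin n → ℝ) : Set (Fin m) :=
  {i | l i < M.mulVec x i ∧ M.mulVec x i = u i}

/-- Free (inactive) set of the constraint `l ≤ M x ≤ u`. -/
def actF (M : Matrix (Fin m) (Fin n) ℝ) (l u : Fin m → ℝ) (x : Fin n → ℝ) : Set (Fin m) :=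
  {i | l i < M.mulVec x i ∧ M.mulVec x i < u i}

/-- The relaxed feasible set Ω̃. -/
def LCQPData.relFeas (P : LCQPData n nA nc) : Set (Fin n → ℝ) :=
  {x | (∀ i, P.lA i ≤ P.A.mulVec x i ∧ P.A.mulVec x i ≤ P.uA i) ∧
       (∀ i, P.lL i ≤ P.L.mulVec x i ∧ P.L.mulVec x i ≤ P.uL i) ∧
       (∀ i, P.lR i ≤ P.R.mulVec x i ∧ P.R.mulVec x i ≤ P.uR i)}

/-- The penalty function φ. -/
def LCQPData.phi (P : LCQPData n nA nc) (x : Fin n → ℝ) : ℝ :=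
  (P.L.mulVec x - P.lL) ⬝ᵥ (P.R.mulVec x - P.lR)

/-- The LCQP feasible set Ω. -/
def LCQPData.feas (P : LCQPData n nA nc) : Set (Fin n → ℝ) :=
  {x ∈ P.relFeas | P.phi x = 0}

/-- ∇φ(x). -/
def LCQPData.gradPhi (P : LCQPData n nA nc) (x : Fin n → ℝ) : Fin n → ℝ :=
  P.Lᵀ.mulVec (P.R.mulVec x - P.lR) + P.Rᵀ.mulVec (P.L.mulVec x - P.lL)

/-- The quadratic objective f. -/
def LCQPData.obj (P : LCQPData n nA nc) (x : Fin n → ℝ) : ℝ :=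
  (1/2) * (x ⬝ᵥ P.Q.mulVec x) + P.g ⬝ᵥ x

/-- The penalized objective ψ_ρ. -/
def LCQPData.psi (P : LCQPData n nA nc) (ρ : ℝ) (x : Fin n → ℝ) : ℝ :=
  P.obj x + ρ * P.phi x

/-- ∇ψ_ρ(x). -/
def LCQPData.gradPsi (P : LCQPData n nA nc) (ρ : ℝ) (x : Fin n → ℝ) : Fin n → ℝ :=
  P.Q.mulVec x + P.g + ρ • P.gradPhi x

/-- The convexified inner-loop model ϑ_{x̄,ρ}. -/
def LCQPData.theta (P : LCQPData n nA nc) (ρ : ℝ) (xb x : Fin n → ℝ) : ℝ :=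
  (1/2) * (x ⬝ᵥ P.Q.mulVec x) + (P.g + ρ • P.gradPhi xb) ⬝ᵥ x

/-- Strong stationarity of the LCQP. -/
def LCQPData.StrongStat (P : LCQPData n nA nc) (x : Fin n → ℝ)
    (yA : Fin nA → ℝ) (yL yR : Fin nc → ℝ) : Prop :=
  x ∈ P.feas ∧
  P.Q.mulVec x + P.g = P.Aᵀ.mulVec yA + P.Lᵀ.mulVec yL + P.Rᵀ.mulVec yR ∧
  (∀ i ∈ actF P.A P.lA P.uA x, yA i = 0) ∧
  (∀ i ∈ actL P.A P.lA P.uA x, 0 ≤ yA i) ∧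
  (∀ i ∈ actU P.A P.lA P.uA x, yA i ≤ 0) ∧
  (∀ i ∈ actF P.L P.lL P.uL x, yL i = 0) ∧
  (∀ i ∈ actL P.L P.lL P.uL x ∩ actL P.R P.lR P.uR x, 0 ≤ yL i) ∧
  (∀ i ∈ actU P.L P.lL P.uL x, yL i ≤ 0) ∧
  (∀ i ∈ actF P.R P.lR P.uR x, yR i = 0) ∧
  (∀ i ∈ actL P.L P.lL P.uL x ∩ actL P.R P.lR P.uR x, 0 ≤ yR i) ∧
  (∀ i ∈ actU P.R P.lR P.uR x, yR i ≤ 0)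

/-- KKT point of the penalized problem min_{x ∈ Ω̃} ψ_ρ(x). -/
def LCQPData.PenKKT (P : LCQPData n nA nc) (ρ : ℝ) (x : Fin n → ℝ)
    (yA : Fin nA → ℝ) (yL yR : Fin nc → ℝ) : Prop :=
  x ∈ P.relFeas ∧
  P.Q.mulVec x + P.g + ρ • P.gradPhi x
    = P.Aᵀ.mulVec yA + P.Lᵀ.mulVec yL + P.Rᵀ.mulVec yR ∧
  (∀ i ∈ actF P.A P.lA P.uA x, yA i = 0) ∧
  (∀ i ∈ actL P.A P.lA P.uA x, 0 ≤ yA i) ∧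
  (∀ i ∈ actU P.A P.lA P.uA x, yA i ≤ 0) ∧
  (∀ i ∈ actF P.L P.lL P.uL x, yL i = 0) ∧
  (∀ i ∈ actL P.L P.lL P.uL x, 0 ≤ yL i) ∧
  (∀ i ∈ actU P.L P.lL P.uL x, yL i ≤ 0) ∧
  (∀ i ∈ actF P.R P.lR P.uR x, yR i = 0) ∧
  (∀ i ∈ actL P.R P.lR P.uR x, 0 ≤ yR i) ∧
  (∀ i ∈ actU P.R P.lR P.uR x, yR i ≤ 0)

/-!
Complementarity at the feasible point x̄ forces, index by index, one of the two slacks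
`L x̄ - ℓ_L`, `R x̄ - ℓ_R` to vanish. Since `ℓ_L < u_L`, an index outside `𝓛ˡ(x̄)` has
`L_i x̄ > ℓ_L`, hence `R_i x̄ = ℓ_R`; so the piecewise multiplier `ȳ_L` is just
`y*_L + ρ (R x̄ - ℓ_R)`, and symmetrically `ȳ_R = y*_R + ρ (L x̄ - ℓ_L)`. The identity is then the
strong-stationarity equation with `ρ ∇φ(x̄)` added to both sides.
-/

theorem mul_eq_zero_of_dotProduct_eq_zero {ι R : Type*} [Fintype ι] [CommSemiring R]
    [PartialOrder R] [IsOrderedRing R] {a b : ι → R} (ha : 0 ≤ a) (hb : 0 ≤ b)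
    (hab : a ⬝ᵥ b = 0) (i : ι) : a i * b i = 0 :=
  (Finset.sum_eq_zero_iff_of_nonneg fun j _ => mul_nonneg (ha j) (hb j)).1 hab i
    (Finset.mem_univ i)

theorem ite_add_mul_eq_add_smul {ι R : Type*} [Semiring R] {s : Set ι}
    [DecidablePred (· ∈ s)] (y v : ι → R) (c : R) (hv : ∀ i ∉ s, v i = 0) :
    (fun i => if i ∈ s then y i + c * v i else y i) = y + c • v := by
  funext i
  by_cases hi : i ∈ s <;> simp [hi, hv]

theorem lt_mulVec_of_notMem_actL {M : Matrix (Fin m) (Fin n) ℝ} {l u : Fin m → ℝ}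
    {x : Fin n → ℝ} {i : Fin m} (hlu : l i < u i) (hle : l i ≤ (M *ᵥ x) i)
    (hi : i ∉ actL M l u x) : l i < (M *ᵥ x) i :=
  hle.lt_of_ne fun h => hi ⟨h, h ▸ hlu⟩

namespace LCQPData

variable (P : LCQPData n nA nc) {x : Fin n → ℝ}

theorem slack_mul_slack_eq_zero (hx : x ∈ P.feas) (i : Fin nc) :
    ((P.L *ᵥ x) i - P.lL i) * ((P.R *ᵥ x) i - P.lR i) = 0 :=
  mul_eq_zero_of_dotProduct_eq_zero (fun j => sub_nonneg.2 (hx.1.2.1 j).1)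
    (fun j => sub_nonneg.2 (hx.1.2.2 j).1) hx.2 i

theorem R_slack_eq_zero_of_notMem_actL (hx : x ∈ P.feas) (hLbnd : ∀ i, P.lL i < P.uL i)
    (i : Fin nc) (hi : i ∉ actL P.L P.lL P.uL x) : (P.R *ᵥ x) i - P.lR i = 0 :=
  (mul_eq_zero.1 (P.slack_mul_slack_eq_zero hx i)).resolve_left <| sub_ne_zero.2
    (lt_mulVec_of_notMem_actL (hLbnd i) (hx.1.2.1 i).1 hi).ne'

theorem L_slack_eq_zero_of_notMem_actL (hx : x ∈ P.feas) (hRbnd : ∀ i, P.lR i < P.uR i)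
    (i : Fin nc) (hi : i ∉ actL P.R P.lR P.uR x) : (P.L *ᵥ x) i - P.lL i = 0 :=
  (mul_eq_zero.1 (P.slack_mul_slack_eq_zero hx i)).resolve_right <| sub_ne_zero.2
    (lt_mulVec_of_notMem_actL (hRbnd i) (hx.1.2.2 i).1 hi).ne'

end LCQPData

theorem stationarity_identity_general (n nA nc : ℕ) (P : LCQPData n nA nc)
    (hLbnd : ∀ i, P.lL i < P.uL i) (hRbnd : ∀ i, P.lR i < P.uR i)
    (xs : Fin n → ℝ) (yA : Fin nA → ℝ) (yL yR : Fin nc → ℝ)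
    (hss : P.StrongStat xs yA yL yR)
    (xb : Fin n → ℝ) (hxb : xb ∈ P.feas)
    (ρ : ℝ) :
    P.Q.mulVec xs + P.g +
        ρ • (P.Lᵀ.mulVec (P.R.mulVec xb - P.lR) + P.Rᵀ.mulVec (P.L.mulVec xb - P.lL))
      = P.Aᵀ.mulVec yA
        + P.Lᵀ.mulVec (fun i => if i ∈ actL P.L P.lL P.uL xb
            then yL i + ρ * (P.R.mulVec xb i - P.lR i) else yL i)
        + P.Rᵀ.mulVec (fun i => if i ∈ actL P.R P.lR P.uR xb
            then yR i + ρ * (P.L.mulVec xb i - P.lL i) else yR i) := by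
  obtain ⟨-, hstat, -⟩ := hss
  rw [ite_add_mul_eq_add_smul yL _ ρ (P.R_slack_eq_zero_of_notMem_actL hxb hLbnd),
    ite_add_mul_eq_add_smul yR _ ρ (P.L_slack_eq_zero_of_notMem_actL hxb hRbnd),
    mulVec_add, mulVec_add, mulVec_smul, mulVec_smul, hstat]
  module

/-- Stationarity identity in the proof of Theorem 4.3 (equations (33)–(34)). -/
theorem stationarity_identity (n nA nc : ℕ) (P : LCQPData n nA nc)
    (hQ : P.Q.PosDef)
    (hLbnd : ∀ i, P.lL i < P.uL i) (hRbnd : ∀ i, P.lR i < P.uR i)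
    (xs : Fin n → ℝ) (yA : Fin nA → ℝ) (yL yR : Fin nc → ℝ)
    (hss : P.StrongStat xs yA yL yR)
    (xb : Fin n → ℝ) (hxb : xb ∈ P.feas)
    (hL : actL P.L P.lL P.uL xb = actL P.L P.lL P.uL xs)
    (hR : actL P.R P.lR P.uR xb = actL P.R P.lR P.uR xs)
    (ρ : ℝ) (hρ : 0 < ρ) :
    P.Q.mulVec xs + P.g +
        ρ • (P.Lᵀ.mulVec (P.R.mulVec xb - P.lR) + P.Rᵀ.mulVec (P.L.mulVec xb - P.lL))
      = P.Aᵀ.mulVec yA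
        + P.Lᵀ.mulVec (fun i => if i ∈ actL P.L P.lL P.uL xb
            then yL i + ρ * (P.R.mulVec xb i - P.lR i) else yL i)
        + P.Rᵀ.mulVec (fun i => if i ∈ actL P.R P.lR P.uR xb
            then yR i + ρ * (P.L.mulVec xb i - P.lL i) else yR i) :=
  stationarity_identity_general n nA nc P hLbnd hRbnd xs yA yL yR hss xb hxb ρ
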